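/- The visual boundary ∂DL_2(q) is totally disconnected: every subset with at least two points is disconnected. -/

import Mathlib

/-- A vertex of the (q+1)-regular tree with a distinguished end, in the
horocyclic model: a height `k ∈ ℤ` together with a finitely supported
labelling of the levels strictly below `k`. -/
structure TreeVert (q : ℕ) where
  height : ℤ
  labels : ℤ → ℕ
  labels_lt : ∀ n, labels n = 0 ∨ labels n < q
  supp_below : ∀ n, height ≤ n → labels n = 0
  fin_supp : (Function.support labels).Finite

namespace DL

variable {q d : ℕ}

/-- `v` is a child of `u` (one step further from the distinguished end). -/
abbrev treeAdjUp (u v : TreeVert q) : Prop :=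
  v.height = u.height + 1 ∧ ∀ n, n ≠ u.height → v.labels n = u.labels n

/-- The (q+1)-regular tree. -/
def TreeGraph (q : ℕ) : SimpleGraph (TreeVert q) where
  Adj u v := treeAdjUp u v ∨ treeAdjUp v u
  symm := ⟨fun u v h => Or.symm h⟩
  loopless := by
    constructor
    intro u h
    rcases h with ⟨h1, _⟩ | ⟨h1, _⟩ <;> omega

/-- The base vertex of the tree. -/
def treeOrigin (q : ℕ) : TreeVert q :=
  ⟨0, fun _ => 0, fun _ => Or.inl rfl, fun _ _ => rfl, by simp⟩

/-- Vertices of the Diestel–Leader graph `DL_d(q)`: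
`d`-tuples of tree vertices whose heights sum to zero. -/
def DLVert (d q : ℕ) : Type :=
  {x : Fin d → TreeVert q // (∑ i, (x i).height) = 0}

/-- The Diestel–Leader graph `DL_d(q)`: an edge ascends in one tree and
descends in another, all other coordinates being fixed. -/
def DLGraph (d q : ℕ) : SimpleGraph (DLVert d q) where
  Adj v w := ∃ i j : Fin d, i ≠ j ∧ treeAdjUp (v.1 i) (w.1 i) ∧ treeAdjUp (w.1 j) (v.1 j) ∧
      ∀ k : Fin d, k ≠ i → k ≠ j → v.1 k = w.1 k
  symm := by
    constructor
    rintro v w ⟨i, j, hij, h1, h2, h3⟩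
    exact ⟨j, i, hij.symm, h2, h1, fun k hk1 hk2 => (h3 k hk2 hk1).symm⟩
  loopless := by
    constructor
    rintro v ⟨i, j, hij, ⟨h1, _⟩, _⟩
    omega

/-- The base point of `DL_d(q)`. -/
def origin (d q : ℕ) : DLVert d q :=
  ⟨fun _ => treeOrigin q, by simp [treeOrigin]⟩

/-- A geodesic ray in `DL_d(q)` : an isometric embedding of `ℕ`. -/
def IsGeodesicRay (γ : ℕ → DLVert d q) : Prop :=
  ∀ m n : ℕ, m ≤ n → (DLGraph d q).dist (γ m) (γ n) = n - m

/-- Two rays are asymptotic when they stay at uniformly bounded distance. -/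
def Asymptotic (γ γ' : ℕ → DLVert d q) : Prop :=
  ∃ C : ℕ, ∀ n : ℕ, (DLGraph d q).dist (γ n) (γ' n) ≤ C

instance : TopologicalSpace (DLVert d q) := ⊥

/-- Geodesic rays emanating from the origin, with the topology of uniform
convergence on compact sets (= pointwise convergence, the vertex set being
discrete). -/
def RaySpace (d q : ℕ) : Type :=
  {γ : ℕ → DLVert d q // IsGeodesicRay γ ∧ γ 0 = origin d q}

instance : TopologicalSpace (RaySpace d q) := by
  unfold RaySpace; infer_instance

lemma reachable_origin (γ : RaySpace d q) (n : ℕ) :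
    (DLGraph d q).Reachable (origin d q) (γ.1 n) := by
  cases n with
  | zero => rw [γ.2.2]
  | succ n =>
    have h := γ.2.1 0 (n + 1) (Nat.zero_le _)
    have hne : (DLGraph d q).dist (γ.1 0) (γ.1 (n + 1)) ≠ 0 := by
      rw [h]; omega
    have := SimpleGraph.Reachable.of_dist_ne_zero hne
    rwa [γ.2.2] at this

/-- Asymptoticity as an equivalence relation on geodesic rays from the origin. -/
def asympSetoid (d q : ℕ) : Setoid (RaySpace d q) where
  r γ γ' := Asymptotic γ.1 γ'.1
  iseqv := by
    constructor
    · intro γ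
      exact ⟨0, fun n => by simp [SimpleGraph.dist_self]⟩
    · rintro γ γ' ⟨C, hC⟩
      exact ⟨C, fun n => by rw [SimpleGraph.dist_comm]; exact hC n⟩
    · rintro a b c ⟨C1, h1⟩ ⟨C2, h2⟩
      refine ⟨C1 + C2, fun n => ?_⟩
      have hab : (DLGraph d q).Reachable (a.1 n) (b.1 n) :=
        (reachable_origin a n).symm.trans (reachable_origin b n)
      have hbc : (DLGraph d q).Reachable (b.1 n) (c.1 n) :=
        (reachable_origin b n).symm.trans (reachable_origin c n)
      obtain ⟨p, hp⟩ := hab.exists_walk_length_eq_dist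
      obtain ⟨p', hp'⟩ := hbc.exists_walk_length_eq_dist
      calc (DLGraph d q).dist (a.1 n) (c.1 n) ≤ (p.append p').length :=
            SimpleGraph.dist_le _
        _ = (DLGraph d q).dist (a.1 n) (b.1 n) + (DLGraph d q).dist (b.1 n) (c.1 n) := by
            rw [SimpleGraph.Walk.length_append, hp, hp']
        _ ≤ C1 + C2 := Nat.add_le_add (h1 n) (h2 n)

/-- The visual boundary of `DL_d(q)`: asymptotic classes of geodesic rays
from the origin, with the quotient topology. -/
def Boundary (d q : ℕ) : Type := Quotient (asympSetoid d q)

instance : TopologicalSpace (Boundary d q) := by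
  unfold Boundary; infer_instance

/-- A ray in `DL_2(q)` descends for exactly `n` steps in tree `i`
(bottoming out at height `-n`), then ascends forever in tree `i`.
For `n = 0` this says the ray ascends forever in tree `i` with no turn. -/
def DescendsExactly (i : Fin 2) (n : ℕ) (γ : ℕ → DLVert 2 q) : Prop :=
  (∀ t : ℕ, t ≤ n → ((γ t).1 i).height = -(t : ℤ)) ∧
  (∀ t : ℕ, n ≤ t → ((γ t).1 i).height = (t : ℤ) - 2 * n)

/-- The subset `C_n^i` of the boundary: classes of rays bottoming out in
tree `i` after descending exactly `n` edges. -/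
def Cset (q : ℕ) (i : Fin 2) (n : ℕ) : Set (Boundary 2 q) :=
  {x | ∃ γ : RaySpace 2 q, Quotient.mk (asympSetoid 2 q) γ = x ∧ DescendsExactly i n γ.1}

/-- Projection of a path in `DL_d(q)` to the `i`-th tree. -/
def proj (i : Fin d) (γ : ℕ → DLVert d q) : ℕ → TreeVert q := fun n => (γ n).1 i

/-- Two (lazy) paths in the tree converge to the same end: both eventually
leave every ball, and they come within a uniformly bounded distance of each
other at arbitrarily late times. -/
def SameEnd (a b : ℕ → TreeVert q) : Prop :=
  (∀ R : ℕ, ∃ N : ℕ, ∀ n, N ≤ n → R ≤ (TreeGraph q).dist (a 0) (a n)) ∧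
  (∀ R : ℕ, ∃ N : ℕ, ∀ n, N ≤ n → R ≤ (TreeGraph q).dist (b 0) (b n)) ∧
  (∃ C : ℕ, ∀ N : ℕ, ∃ m n, N ≤ m ∧ N ≤ n ∧ (TreeGraph q).dist (a m) (b n) ≤ C)

/-- The step from `p m` to `p (m+1)` descends in tree `i`. -/
def StepDown (i : Fin d) (p : ℕ → DLVert d q) (m : ℕ) : Prop :=
  treeAdjUp ((p (m + 1)).1 i) ((p m).1 i)

/-- The step from `p m` to `p (m+1)` ascends in tree `i`. -/
def StepUp (i : Fin d) (p : ℕ → DLVert d q) (m : ℕ) : Prop :=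
  treeAdjUp ((p m).1 i) ((p (m + 1)).1 i)

/-- A turn in tree `i`: a subpath beginning with a descent in `T_i` at step `t`,
ending with an ascent in `T_i` at step `s`, with no intervening step
involving `T_i`. -/
def IsTurn (i : Fin d) (p : ℕ → DLVert d q) (t s : ℕ) : Prop :=
  t < s ∧ StepDown i p t ∧ StepUp i p s ∧
    ∀ m, t < m → m < s → (p (m + 1)).1 i = (p m).1 i

/-!
Along a geodesic ray in `DL_2(q)`, the labels below the band of heights visited during a time
window are frozen, and the walk through the bottom of the band then bounds the length of the
window by twice the width of the band. Hence a ray from the origin turns at most once: it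
descends `n` steps in some tree `i`, then ascends in `i` forever, writing a label at each level
`h ≥ -n`. Two rays are asymptotic iff they have the same type `(i, n)` and write the same labels.

A connected set `S` therefore lies in one `C_n^i`: the sets `C_n^i` with `n ≠ 0` are clopen, and
so is the set of classes whose first step ascends in tree `0`, which separates `C_0^0` from
`C_0^1`. Two points of `S` differ in the label at some level `h`. The classes with a prescribed
label at level `h`, together with all classes turning after that label is written, form an open
set, and two such sets for different labels split `C_n^i`. For `n = 0` the late-turning classes
cannot be dropped: every neighbourhood of a point of `C_0^i` contains `C_m^j` for all large `m`.
-/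

theorem exists_walk_iterate_length {V : Type*} {G : SimpleGraph V} {S : V → V}
    (hS : ∀ v, G.Adj v (S v)) (v : V) (k : ℕ) :
    ∃ w : G.Walk v (S^[k] v), w.length = k := by
  induction k with
  | zero => exact ⟨.nil, rfl⟩
  | succ k ih =>
    obtain ⟨w, hw⟩ := ih
    rw [Function.iterate_succ_apply']
    exact ⟨w.concat (hS _), by rw [SimpleGraph.Walk.length_concat, hw]⟩

theorem TreeVert.ext {a b : TreeVert q} (hh : a.height = b.height)
    (hl : ∀ n, a.labels n = b.labels n) : a = b := by
  cases a; cases b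
  simp only [TreeVert.mk.injEq]
  exact ⟨hh, funext hl⟩

namespace TreeVert

def parent (v : TreeVert q) : TreeVert q where
  height := v.height - 1
  labels n := if v.height - 1 ≤ n then 0 else v.labels n
  labels_lt n := by split <;> [exact Or.inl rfl; exact v.labels_lt n]
  supp_below n hn := if_pos hn
  fin_supp := v.fin_supp.subset fun n hn => by
    simp only [Function.mem_support, ne_eq, ite_eq_left_iff, not_forall] at hn ⊢
    exact hn.2

def child (f : ℤ → ℕ) (hf : ∀ n, f n = 0 ∨ f n < q) (v : TreeVert q) : TreeVert q where
  height := v.height + 1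
  labels n := if n = v.height then f n else v.labels n
  labels_lt n := by split <;> [exact hf n; exact v.labels_lt n]
  supp_below n hn := by rw [if_neg (by omega)]; exact v.supp_below n (by omega)
  fin_supp := (v.fin_supp.union (Set.finite_singleton v.height)).subset fun n hn => by
    by_cases h : n = v.height
    · exact Or.inr h
    · exact Or.inl (by simpa [Function.mem_support, h] using hn)

variable (f : ℤ → ℕ) (hf : ∀ n, f n = 0 ∨ f n < q)

@[simp] theorem height_parent (v : TreeVert q) : (parent v).height = v.height - 1 := rfl

theorem labels_parent (v : TreeVert q) (n : ℤ) :
    (parent v).labels n = if v.height - 1 ≤ n then 0 else v.labels n := rfl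

@[simp] theorem height_child (v : TreeVert q) : (child f hf v).height = v.height + 1 := rfl

theorem labels_child (v : TreeVert q) (n : ℤ) :
    (child f hf v).labels n = if n = v.height then f n else v.labels n := rfl

theorem treeAdjUp_parent (v : TreeVert q) : treeAdjUp (parent v) v :=
  ⟨by simp, fun n hn => by
    rw [height_parent] at hn
    rw [labels_parent]
    split_ifs with h
    · exact v.supp_below n (by omega)
    · rfl⟩

theorem treeAdjUp_child (v : TreeVert q) : treeAdjUp v (child f hf v) :=
  ⟨rfl, fun _ hn => if_neg hn⟩

theorem height_parent_iterate (k : ℕ) (v : TreeVert q) :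
    (parent^[k] v).height = v.height - k := by
  induction k with
  | zero => simp
  | succ k ih => rw [Function.iterate_succ_apply', height_parent, ih]; push_cast; ring

theorem labels_parent_iterate (k : ℕ) (v : TreeVert q) (n : ℤ) :
    (parent^[k] v).labels n = if v.height - k ≤ n then 0 else v.labels n := by
  induction k with
  | zero =>
    simp only [Function.iterate_zero, id_eq, Nat.cast_zero, sub_zero]
    split_ifs with h
    · exact v.supp_below n h
    · rfl
  | succ k ih =>
    rw [Function.iterate_succ_apply', labels_parent, height_parent_iterate, ih]
    push_cast
    split_ifs <;> first | rfl | omega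

theorem height_child_iterate (k : ℕ) (v : TreeVert q) :
    ((child f hf)^[k] v).height = v.height + k := by
  induction k with
  | zero => simp
  | succ k ih => rw [Function.iterate_succ_apply', height_child, ih]; push_cast; ring

theorem labels_child_iterate (k : ℕ) (v : TreeVert q) (n : ℤ) :
    ((child f hf)^[k] v).labels n =
      if v.height ≤ n ∧ n < v.height + k then f n else v.labels n := by
  induction k with
  | zero =>
    simp only [Function.iterate_zero, id_eq, Nat.cast_zero, add_zero]
    rw [if_neg (by omega)]
  | succ k ih =>
    rw [Function.iterate_succ_apply', labels_child, height_child_iterate, ih]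
    push_cast
    split_ifs <;> first | rfl | omega

end TreeVert

/-- `m` is the lowest level visited by `w`. -/
theorem exists_labels_eq_of_walk {u v : TreeVert q} (w : (TreeGraph q).Walk u v) :
    ∃ m ≤ u.height, m ≤ v.height ∧ (∀ n < m, u.labels n = v.labels n) ∧
      (u.height - m) + (v.height - m) ≤ (w.length : ℤ) := by
  induction w with
  | nil => exact ⟨_, le_rfl, le_rfl, fun _ _ => rfl, by simp⟩
  | @cons u b v h p ih =>
    obtain ⟨m, hmb, hmv, hlab, hlen⟩ := ih
    rw [SimpleGraph.Walk.length_cons]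
    rcases h with hup | hdown
    · refine ⟨min m u.height, min_le_right _ _, by omega, fun n hn => ?_, by
        have := hup.1; push_cast; omega⟩
      rw [← hup.2 n (by omega)]
      exact hlab n (by omega)
    · have := hdown.1
      refine ⟨m, by omega, hmv, fun n hn => ?_, by push_cast; omega⟩
      rw [hdown.2 n (by omega)]
      exact hlab n hn

theorem DLVert.ext {x y : DLVert d q} (h : ∀ k, x.1 k = y.1 k) : x = y :=
  Subtype.ext (funext h)

section TwoTrees

variable {i j : Fin 2}

theorem height_add_height (hij : i ≠ j) (x : DLVert 2 q) :
    (x.1 i).height + (x.1 j).height = 0 := by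
  have := x.2
  rw [Fin.sum_univ_two] at this
  rcases (by omega : i = 0 ∧ j = 1 ∨ i = 1 ∧ j = 0) with ⟨rfl, rfl⟩ | ⟨rfl, rfl⟩ <;> omega

theorem adj_iff (hij : i ≠ j) {v w : DLVert 2 q} :
    (DLGraph 2 q).Adj v w ↔
      (treeAdjUp (v.1 i) (w.1 i) ∧ treeAdjUp (w.1 j) (v.1 j)) ∨
      (treeAdjUp (v.1 j) (w.1 j) ∧ treeAdjUp (w.1 i) (v.1 i)) := by
  constructor
  · rintro ⟨i', j', hij', h1, h2, -⟩
    rcases (by omega : i' = i ∧ j' = j ∨ i' = j ∧ j' = i) with ⟨rfl, rfl⟩ | ⟨rfl, rfl⟩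
    exacts [Or.inl ⟨h1, h2⟩, Or.inr ⟨h1, h2⟩]
  · rintro (⟨h1, h2⟩ | ⟨h1, h2⟩)
    · exact ⟨i, j, hij, h1, h2, fun k _ _ => by omega⟩
    · exact ⟨j, i, hij.symm, h1, h2, fun k _ _ => by omega⟩

theorem treeGraph_adj_of_adj {v w : DLVert 2 q} (h : (DLGraph 2 q).Adj v w) (i : Fin 2) :
    (TreeGraph q).Adj (v.1 i) (w.1 i) := by
  obtain ⟨j, hij⟩ := exists_ne i
  rcases (adj_iff hij.symm).mp h with ⟨h1, -⟩ | ⟨-, h2⟩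
  exacts [Or.inl h1, Or.inr h2]

def ascend (hij : i ≠ j) (f : ℤ → ℕ) (hf : ∀ n, f n = 0 ∨ f n < q) (v : DLVert 2 q) :
    DLVert 2 q :=
  ⟨fun k => if k = i then TreeVert.child f hf (v.1 i) else TreeVert.parent (v.1 j), by
    have := height_add_height hij v
    rw [Fin.sum_univ_two]
    rcases (by omega : i = 0 ∧ j = 1 ∨ i = 1 ∧ j = 0) with ⟨rfl, rfl⟩ | ⟨rfl, rfl⟩ <;>
      simp <;> omega⟩

variable (hij : i ≠ j) (f : ℤ → ℕ) (hf : ∀ n, f n = 0 ∨ f n < q)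
include hij

theorem ascend_iterate (k : ℕ) (v : DLVert 2 q) :
    ((ascend hij f hf)^[k] v).1 i = (TreeVert.child f hf)^[k] (v.1 i) ∧
    ((ascend hij f hf)^[k] v).1 j = TreeVert.parent^[k] (v.1 j) := by
  induction k with
  | zero => simp
  | succ k ih =>
    simp only [Function.iterate_succ_apply', ascend, if_pos, if_neg hij.symm, ih, and_self]

theorem adj_ascend (v : DLVert 2 q) : (DLGraph 2 q).Adj v (ascend hij f hf v) := by
  have h := ascend_iterate hij f hf 1 v
  simp only [Function.iterate_one] at h
  rw [adj_iff hij, h.1, h.2]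
  exact Or.inl ⟨TreeVert.treeAdjUp_child f hf _, TreeVert.treeAdjUp_parent _⟩

end TwoTrees

/-- Walk from `x` down to level `Mi` in tree `i`, then up to `y` in tree `i` while descending
to level `Mj` in tree `j`, then up to `y` in tree `j`. -/
theorem dist_le_of_labels_eq {i j : Fin 2} (hij : i ≠ j) {x y : DLVert 2 q} {Mi Mj : ℤ}
    (hMix : Mi ≤ (x.1 i).height) (hMiy : Mi ≤ (y.1 i).height)
    (hMjy : Mj ≤ (y.1 j).height)
    (hLi : ∀ n < Mi, (x.1 i).labels n = (y.1 i).labels n)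
    (hLj : ∀ n < Mj, (x.1 j).labels n = (y.1 j).labels n) :
    ((DLGraph 2 q).dist x y : ℤ) ≤
      2 * ((x.1 i).height - Mi) + ((x.1 j).height - Mj) + ((y.1 j).height - Mj) := by
  have hx := height_add_height hij x
  have hy := height_add_height hij y
  obtain ⟨P, hP⟩ : ∃ P : ℕ, (P : ℤ) = (x.1 i).height - Mi := ⟨_, Int.toNat_of_nonneg (by omega)⟩
  obtain ⟨Q, hQ⟩ : ∃ Q : ℕ, (Q : ℤ) = (x.1 i).height - Mi + ((x.1 j).height - Mj) :=
    ⟨_, Int.toNat_of_nonneg (by omega)⟩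
  obtain ⟨R, hR⟩ : ∃ R : ℕ, (R : ℤ) = (y.1 j).height - Mj := ⟨_, Int.toNat_of_nonneg (by omega)⟩
  obtain ⟨h1j, h1i⟩ := ascend_iterate hij.symm (y.1 j).labels (y.1 j).labels_lt P x
  set z1 := (ascend hij.symm (y.1 j).labels (y.1 j).labels_lt)^[P] x
  obtain ⟨h2i, h2j⟩ := ascend_iterate hij (y.1 i).labels (y.1 i).labels_lt Q z1
  set z2 := (ascend hij (y.1 i).labels (y.1 i).labels_lt)^[Q] z1
  obtain ⟨h3j, h3i⟩ := ascend_iterate hij.symm (y.1 j).labels (y.1 j).labels_lt R z2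
  have hz : (ascend hij.symm (y.1 j).labels (y.1 j).labels_lt)^[R] z2 = y := by
    refine DLVert.ext fun k => ?_
    rcases (by omega : k = i ∨ k = j) with hk | hk <;> rw [hk] <;>
      refine TreeVert.ext ?_ fun n => ?_ <;>
      simp only [h3i, h2i, h1i, h3j, h2j, h1j, TreeVert.labels_parent_iterate,
        TreeVert.labels_child_iterate, TreeVert.height_parent_iterate,
        TreeVert.height_child_iterate] <;>
      try omega
    all_goals
      split_ifs <;>
        first
        | rfl
        | omega
        | exact hLi n (by omega)
        | exact hLj n (by omega)
        | exact ((y.1 _).supp_below n (by omega)).symm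
  obtain ⟨w1, hw1⟩ := exists_walk_iterate_length (adj_ascend hij.symm _ _) x P
  obtain ⟨w2, hw2⟩ := exists_walk_iterate_length (adj_ascend hij _ _) z1 Q
  obtain ⟨w3, hw3⟩ := exists_walk_iterate_length (adj_ascend hij.symm _ _) z2 R
  have := SimpleGraph.dist_le ((w1.append (w2.append w3)).copy rfl hz)
  simp only [SimpleGraph.Walk.length_copy, SimpleGraph.Walk.length_append, hw1, hw2, hw3] at this
  omega

def projHom (i : Fin 2) : DLGraph 2 q →g TreeGraph q where
  toFun v := v.1 i
  map_rel' h := treeGraph_adj_of_adj h i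

theorem exists_labels_eq_of_reachable {x y : DLVert 2 q} (hr : (DLGraph 2 q).Reachable x y)
    (i : Fin 2) :
    ∃ m ≤ (x.1 i).height, m ≤ (y.1 i).height ∧
      (∀ n < m, (x.1 i).labels n = (y.1 i).labels n) ∧
      ((x.1 i).height - m) + ((y.1 i).height - m) ≤ ((DLGraph 2 q).dist x y : ℤ) := by
  obtain ⟨w, hw⟩ := hr.exists_walk_length_eq_dist
  have := exists_labels_eq_of_walk (w.map (projHom i))
  rwa [SimpleGraph.Walk.length_map, hw] at this

theorem le_dist_of_labels_ne {x y : DLVert 2 q} (hr : (DLGraph 2 q).Reachable x y) {i : Fin 2}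
    {n : ℤ} (hne : (x.1 i).labels n ≠ (y.1 i).labels n) :
    ((x.1 i).height - n) + ((y.1 i).height - n) ≤ ((DLGraph 2 q).dist x y : ℤ) := by
  obtain ⟨m, -, -, hlab, hdist⟩ := exists_labels_eq_of_reachable hr i
  have : m ≤ n := not_lt.mp fun h => hne (hlab n h)
  omega

theorem height_zero (γ : RaySpace d q) (i : Fin d) : ((γ.1 0).1 i).height = 0 := by
  rw [γ.2.2]; rfl

theorem labels_zero (γ : RaySpace d q) (i : Fin d) (n : ℤ) : ((γ.1 0).1 i).labels n = 0 := by
  rw [γ.2.2]; rfl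

theorem adj_succ (γ : RaySpace d q) (t : ℕ) : (DLGraph d q).Adj (γ.1 t) (γ.1 (t + 1)) :=
  SimpleGraph.dist_eq_one_iff_adj.mp (by rw [γ.2.1 t (t + 1) (by omega)]; omega)

theorem reachable_rays (γ γ' : RaySpace d q) (s t : ℕ) :
    (DLGraph d q).Reachable (γ.1 s) (γ'.1 t) :=
  (reachable_origin γ s).symm.trans (reachable_origin γ' t)

theorem asymptotic_of_eventually_eq {γ γ' : RaySpace d q} {T : ℕ}
    (h : ∀ t, T ≤ t → γ.1 t = γ'.1 t) : Asymptotic γ.1 γ'.1 := by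
  refine ⟨2 * T, fun t => ?_⟩
  rcases le_total T t with hTt | htT
  · rw [h t hTt, SimpleGraph.dist_self]; exact Nat.zero_le _
  calc (DLGraph d q).dist (γ.1 t) (γ'.1 t)
      ≤ (DLGraph d q).dist (γ.1 t) (γ.1 T) + (DLGraph d q).dist (γ'.1 T) (γ'.1 t) := by
        rw [h T le_rfl]; exact (reachable_rays γ' γ' T t).dist_triangle_right _
    _ ≤ 2 * T := by
        rw [γ.2.1 t T htT, SimpleGraph.dist_comm, γ'.2.1 t T htT]; omega

theorem Asymptotic.symm {γ γ' : ℕ → DLVert d q} (h : Asymptotic γ γ') : Asymptotic γ' γ :=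
  let ⟨C, hC⟩ := h
  ⟨C, fun t => SimpleGraph.dist_comm (G := DLGraph d q) ▸ hC t⟩

instance : DiscreteTopology (DLVert d q) := ⟨rfl⟩

theorem isOpen_of_agree {A : Set (RaySpace d q)}
    (hA : ∀ γ ∈ A, ∃ T, ∀ γ' : RaySpace d q, (∀ t ≤ T, γ'.1 t = γ.1 t) → γ' ∈ A) :
    IsOpen A := by
  refine isOpen_iff_forall_mem_open.mpr fun γ hγ => ?_
  obtain ⟨T, hT⟩ := hA γ hγ
  refine ⟨⋂ t ∈ Set.Iic T, (fun γ' : RaySpace d q => γ'.1 t) ⁻¹' {γ.1 t},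
    fun γ' hγ' => hT γ' fun t ht => by simpa using Set.mem_iInter₂.mp hγ' t ht,
    (Set.finite_Iic T).isOpen_biInter fun t _ =>
      (isOpen_discrete _).preimage ((continuous_apply t).comp continuous_subtype_val),
    by simp⟩

theorem isClopen_of_agree {A : Set (RaySpace d q)} (T : ℕ)
    (hA : ∀ γ γ' : RaySpace d q, (∀ t ≤ T, γ'.1 t = γ.1 t) → γ ∈ A → γ' ∈ A) : IsClopen A :=
  ⟨isOpen_compl_iff.mp <| isOpen_of_agree fun γ hγ =>
      ⟨T, fun γ' h h' => hγ (hA γ' γ (fun t ht => (h t ht).symm) h')⟩,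
    isOpen_of_agree fun γ hγ => ⟨T, fun γ' h => hA γ γ' h hγ⟩⟩

section Ray

variable (γ : RaySpace 2 q) {i j : Fin 2}

theorem stepUp_iff_stepDown (hij : i ≠ j) (t : ℕ) : StepUp j γ.1 t ↔ StepDown i γ.1 t := by
  have hs := height_add_height hij (γ.1 t)
  have hs' := height_add_height hij (γ.1 (t + 1))
  rcases (adj_iff hij).mp (adj_succ γ t) with ⟨hi, -⟩ | ⟨hj, hi⟩
  · have := hi.1
    exact iff_of_false (fun hj => by have := hj.1; omega) (fun hi' => by have := hi'.1; omega)
  · exact iff_of_true hj hi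

theorem stepUp_or_stepDown (i : Fin 2) (t : ℕ) : StepUp i γ.1 t ∨ StepDown i γ.1 t := by
  obtain ⟨j, hji⟩ := exists_ne i
  rcases (adj_iff hji.symm).mp (adj_succ γ t) with ⟨hi, -⟩ | ⟨-, hi⟩
  exacts [Or.inl hi, Or.inr hi]

theorem stepDown_iff_not_stepUp (i : Fin 2) (t : ℕ) : StepDown i γ.1 t ↔ ¬StepUp i γ.1 t :=
  ⟨fun hd hu => by have := hd.1; have := hu.1; omega,
    fun hu => (stepUp_or_stepDown γ i t).resolve_left hu⟩

theorem height_succ_of_stepUp {t : ℕ} (h : StepUp i γ.1 t) :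
    ((γ.1 (t + 1)).1 i).height = ((γ.1 t).1 i).height + 1 := h.1

theorem height_succ_of_stepDown {t : ℕ} (h : StepDown i γ.1 t) :
    ((γ.1 (t + 1)).1 i).height = ((γ.1 t).1 i).height - 1 := by
  have := h.1; omega

theorem labels_succ_of_lt {t : ℕ} {n : ℤ} (hn : n < ((γ.1 t).1 i).height)
    (hn' : n < ((γ.1 (t + 1)).1 i).height) :
    ((γ.1 (t + 1)).1 i).labels n = ((γ.1 t).1 i).labels n := by
  rcases stepUp_or_stepDown γ i t with h | h
  · exact h.2 n (by omega)
  · exact (h.2 n (by omega)).symm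

theorem labels_eq_of_lt {a b : ℕ} (hab : a ≤ b) {M : ℤ}
    (hM : ∀ t, a ≤ t → t ≤ b → M ≤ ((γ.1 t).1 i).height) {n : ℤ} (hn : n < M) :
    ((γ.1 b).1 i).labels n = ((γ.1 a).1 i).labels n := by
  induction b, hab using Nat.le_induction with
  | base => rfl
  | succ b hab ih =>
    rw [labels_succ_of_lt γ (by linarith [hM b hab (by omega)])
      (by linarith [hM (b + 1) (by omega) le_rfl]), ih fun t h1 h2 => hM t h1 (by omega)]

theorem height_of_stepUp_on {a b : ℕ} (h : ∀ s, a ≤ s → s < b → StepUp i γ.1 s) :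
    ∀ t, a ≤ t → t ≤ b → ((γ.1 t).1 i).height = ((γ.1 a).1 i).height + (t - a) := by
  intro t hat htb
  induction t, hat using Nat.le_induction with
  | base => ring
  | succ t hat ih =>
    rw [height_succ_of_stepUp γ (h t hat (by omega)), ih (by omega)]; push_cast; ring

theorem height_of_stepDown_on {a b : ℕ} (h : ∀ s, a ≤ s → s < b → StepDown i γ.1 s) :
    ∀ t, a ≤ t → t ≤ b → ((γ.1 t).1 i).height = ((γ.1 a).1 i).height - (t - a) := by
  intro t hat htb
  induction t, hat using Nat.le_induction with
  | base => ring
  | succ t hat ih =>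
    rw [height_succ_of_stepDown γ (h t hat (by omega)), ih (by omega)]; push_cast; ring

/-- During the window the labels below `L` in tree `i` and below `-U` in the other tree are
frozen, so `dist_le_of_labels_eq` applies to its endpoints. -/
theorem window_le {a b : ℕ} (hab : a ≤ b) {L U : ℤ}
    (hL : ∀ t, a ≤ t → t ≤ b → L ≤ ((γ.1 t).1 i).height)
    (hU : ∀ t, a ≤ t → t ≤ b → ((γ.1 t).1 i).height ≤ U) :
    (b - a : ℤ) + |((γ.1 b).1 i).height - ((γ.1 a).1 i).height| ≤ 2 * (U - L) := by
  obtain ⟨j, hji⟩ := exists_ne i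
  have hsum := fun t => height_add_height hji.symm (γ.1 t)
  have hLj : ∀ t, a ≤ t → t ≤ b → -U ≤ ((γ.1 t).1 j).height := fun t h1 h2 => by
    have := hU t h1 h2; have := hsum t; omega
  have hlabi := fun n (hn : n < L) => (labels_eq_of_lt γ hab hL hn).symm
  have hlabj := fun n (hn : n < -U) => (labels_eq_of_lt γ hab hLj hn).symm
  have h1 := dist_le_of_labels_eq hji.symm (hL a le_rfl hab) (hL b hab le_rfl)
    (hLj b hab le_rfl) hlabi hlabj
  have h2 := dist_le_of_labels_eq hji (hLj a le_rfl hab) (hLj b hab le_rfl)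
    (hL b hab le_rfl) hlabj hlabi
  rw [γ.2.1 a b hab] at h1 h2
  have := hsum a; have := hsum b
  rw [abs_eq_max_neg]
  push_cast [hab] at h1 h2
  omega

/-- `window_le` on the window `[n - 1, b]`, which opens one step before the turn at time `n`. -/
theorem window_le_of_turn {n u b : ℕ} (hn : 0 < n) (hnu : n < u) (hub : u ≤ b)
    (hdown : ∀ t < n, StepDown i γ.1 t) (hup : ∀ s, n ≤ s → s < u → StepUp i γ.1 s)
    (hband : ∀ t, u ≤ t → t ≤ b →
      -(n : ℤ) ≤ ((γ.1 t).1 i).height ∧ ((γ.1 t).1 i).height ≤ u - 2 * n) :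
    (b - n + 1 : ℤ) + |((γ.1 b).1 i).height - (1 - n)| ≤ 2 * (u - n) := by
  have H1 := height_of_stepDown_on γ (a := 0) (b := n) fun s _ hs => hdown s hs
  have H2 := height_of_stepUp_on γ hup
  rw [height_zero] at H1
  have hHn := H1 n (Nat.zero_le n) le_rfl
  have hHa := H1 (n - 1) (Nat.zero_le _) (by omega)
  have := window_le γ (i := i) (a := n - 1) (b := b) (L := -n) (U := u - 2 * n) (by omega)
    (fun t h1 h2 => ?_) (fun t h1 h2 => ?_)
  · rw [abs_eq_max_neg] at this ⊢
    push_cast [hn] at this hHa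
    omega
  all_goals
    rcases le_or_gt t n with ht | ht
    · have := H1 t (Nat.zero_le t) ht; push_cast at this; omega
    rcases le_or_gt t u with ht' | ht'
    · have := H2 t ht.le ht'; omega
    · have := hband t ht'.le h2; omega

/-- A descent at `u` lasts either `u - n` steps, back down to height `-n`, or is cut short by an
ascent; in both cases the window from time `n - 1` is too long for its band `[-n, u - 2n]`. -/
theorem not_stepDown_of_turn {n u : ℕ} (hn : 0 < n) (hnu : n < u)
    (hdown : ∀ t < n, StepDown i γ.1 t) (hup : ∀ s, n ≤ s → s < u → StepUp i γ.1 s) :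
    ¬StepDown i γ.1 u := by
  classical
  intro hu
  have hHu := height_of_stepUp_on γ hup u hnu.le le_rfl
  have hHn := height_of_stepDown_on γ (a := 0) (b := n) (fun s _ hs => hdown s hs) n
    (Nat.zero_le n) le_rfl
  rw [height_zero] at hHn
  push_cast at hHu hHn
  by_cases hB : ∃ w, u < w ∧ w < u + (u - n) ∧ StepUp i γ.1 w
  · have hwmin := fun s (hs : s < Nat.find hB) => Nat.find_min hB hs
    obtain ⟨huw, hwk, hw⟩ := Nat.find_spec hB
    generalize Nat.find hB = w at huw hwk hw hwmin
    have H3 := height_of_stepDown_on γ (a := u) (b := w) fun s h1 h2 =>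
      (stepDown_iff_not_stepUp γ i s).2 fun h => by
        rcases h1.lt_or_eq with h1 | rfl
        · exact hwmin s h2 ⟨h1, by omega, h⟩
        · exact (stepDown_iff_not_stepUp γ i _).1 hu h
    have hHw := H3 w huw.le le_rfl
    have hHw' := height_succ_of_stepUp γ hw
    have := window_le_of_turn γ hn hnu (by omega : u ≤ w + 1) hdown hup fun t h1 h2 => by
      rcases h2.lt_or_eq with h2 | rfl
      · have := H3 t h1 (by omega); omega
      · omega
    rw [abs_eq_max_neg, hHw'] at this
    omega
  · push Not at hB
    have H3 := height_of_stepDown_on γ (a := u) (b := u + (u - n)) fun s h1 h2 =>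
      (stepDown_iff_not_stepUp γ i s).2 fun h => by
        rcases h1.lt_or_eq with h1 | rfl
        · exact hB s h1 h2 h
        · exact (stepDown_iff_not_stepUp γ i _).1 hu h
    have := window_le_of_turn γ hn hnu (Nat.le_add_right u _) hdown hup fun t h1 h2 => by
      have := H3 t h1 h2; omega
    rw [abs_eq_max_neg, H3 _ (Nat.le_add_right u _) le_rfl] at this
    push_cast [hnu.le] at this
    omega

theorem stepUp_of_turn {n : ℕ} (hn : 0 < n) (hdown : ∀ t < n, StepDown i γ.1 t)
    (hup : StepUp i γ.1 n) : ∀ t, n ≤ t → StepUp i γ.1 t := by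
  intro u hu
  induction u using Nat.strong_induction_on with
  | _ u ih =>
    rcases hu.lt_or_eq with hnu | rfl
    · exact not_not.mp fun h => not_stepDown_of_turn γ hn hnu hdown (fun s h1 h2 => ih s h2 h1)
        ((stepDown_iff_not_stepUp γ i u).2 h)
    · exact hup

theorem descendsExactly_of_steps {n : ℕ} (hdown : ∀ t < n, StepDown i γ.1 t)
    (hup : ∀ t, n ≤ t → StepUp i γ.1 t) : DescendsExactly i n γ.1 := by
  have H1 := height_of_stepDown_on γ (a := 0) (b := n) fun s _ hs => hdown s hs
  rw [height_zero] at H1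
  refine ⟨fun t ht => by rw [H1 t (Nat.zero_le t) ht]; push_cast; ring, fun t ht => ?_⟩
  rw [height_of_stepUp_on γ (a := n) (b := t) (fun s hs _ => hup s hs) t ht le_rfl,
    H1 n (Nat.zero_le n) le_rfl]
  push_cast; ring

theorem exists_descendsExactly : ∃ i n, DescendsExactly i n γ.1 := by
  classical
  obtain ⟨i, hi⟩ : ∃ i, StepDown i γ.1 0 := by
    rcases stepUp_or_stepDown γ 0 0 with h | h
    exacts [⟨1, (stepUp_iff_stepDown γ (by decide) 0).1 h⟩, ⟨0, h⟩]
  by_cases hex : ∃ t, StepUp i γ.1 t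
  · have hdown : ∀ t < Nat.find hex, StepDown i γ.1 t := fun t ht =>
      (stepDown_iff_not_stepUp γ i t).2 (Nat.find_min hex ht)
    have hn : 0 < Nat.find hex := Nat.find_pos hex |>.2 ((stepDown_iff_not_stepUp γ i 0).1 hi)
    exact ⟨i, _, descendsExactly_of_steps γ hdown
      (stepUp_of_turn γ hn hdown (Nat.find_spec hex))⟩
  · push Not at hex
    obtain ⟨j, hji⟩ := exists_ne i
    exact ⟨j, 0, descendsExactly_of_steps γ (fun t ht => absurd ht (Nat.not_lt_zero t))
      fun t _ => (stepUp_iff_stepDown γ hji.symm t).2 ((stepDown_iff_not_stepUp γ i t).2 (hex t))⟩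

end Ray

theorem DescendsExactly.unique {γ : ℕ → DLVert 2 q} {i i' : Fin 2} {n n' : ℕ}
    (h : DescendsExactly i n γ) (h' : DescendsExactly i' n' γ) : i = i' ∧ n = n' := by
  have e := h.2 (n + n' + 1) (by omega)
  have e' := h'.2 (n + n' + 1) (by omega)
  by_cases hii : i = i'
  · subst hii; exact ⟨rfl, by omega⟩
  · have := height_add_height hii (γ (n + n' + 1)); push_cast at e e'; omega

theorem DescendsExactly.height_eq {γ γ' : ℕ → DLVert 2 q} {i : Fin 2} {n : ℕ}
    (h : DescendsExactly i n γ) (h' : DescendsExactly i n γ') (k : Fin 2) (t : ℕ) :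
    ((γ t).1 k).height = ((γ' t).1 k).height := by
  have hi : ((γ t).1 i).height = ((γ' t).1 i).height := by
    rcases le_total t n with ht | ht
    · rw [h.1 t ht, h'.1 t ht]
    · rw [h.2 t ht, h'.2 t ht]
  rcases eq_or_ne k i with rfl | hki
  · exact hi
  · have := height_add_height hki (γ t); have := height_add_height hki (γ' t); omega

/-- For a ray of type `(i, n)`, the label of tree `i` at level `h ≥ -n` is written at time
`2n + h` and never changes afterwards. -/
def RaySpace.read (γ : RaySpace 2 q) (i : Fin 2) (n : ℕ) (h : ℤ) : ℕ :=
  ((γ.1 (2 * n + h + 1).toNat).1 i).labels h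

namespace DescendsExactly

variable {γ : RaySpace 2 q} {i j : Fin 2} {n : ℕ} (hγ : DescendsExactly i n γ.1)
include hγ

theorem neg_le_height (t : ℕ) : -(n : ℤ) ≤ ((γ.1 t).1 i).height := by
  rcases le_total t n with ht | ht
  · rw [hγ.1 t ht]; omega
  · rw [hγ.2 t ht]; omega

theorem stepUp {t : ℕ} (ht : n ≤ t) : StepUp i γ.1 t := by
  refine (stepUp_or_stepDown γ i t).resolve_right fun hd => ?_
  have := height_succ_of_stepDown γ hd
  rw [hγ.2 t ht, hγ.2 (t + 1) (by omega)] at this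
  push_cast at this
  omega

theorem labels_eq_zero (t : ℕ) {m : ℤ} (hm : m < -n) : ((γ.1 t).1 i).labels m = 0 := by
  induction t with
  | zero => exact labels_zero γ i m
  | succ t ih =>
    rwa [labels_succ_of_lt γ (by linarith [hγ.neg_le_height t])
      (by linarith [hγ.neg_le_height (t + 1)])]

/-- Tree `j` only ascends at non-negative levels, so its negative labels stay `0`. -/
theorem labels_other_eq_zero (hij : i ≠ j) (t : ℕ) {m : ℤ} (hm : m < 0) :
    ((γ.1 t).1 j).labels m = 0 := by
  induction t with
  | zero => exact labels_zero γ j m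
  | succ t ih =>
    have hs := height_add_height hij (γ.1 t)
    have hs' := height_add_height hij (γ.1 (t + 1))
    by_cases hm' : m < ((γ.1 (t + 1)).1 j).height
    · rw [labels_succ_of_lt γ ?_ hm', ih]
      rcases le_or_gt n t with ht | ht
      · have := hγ.2 t ht; have := hγ.2 (t + 1) (by omega); push_cast at *; omega
      · have := hγ.1 t ht.le; omega
    · exact ((γ.1 (t + 1)).1 j).supp_below m (by omega)

theorem labels_eq_read {h : ℤ} (hh : -(n : ℤ) ≤ h) {t : ℕ} (ht : 2 * n + h + 1 ≤ t) :
    ((γ.1 t).1 i).labels h = γ.read i n h := by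
  obtain ⟨T, hT⟩ : ∃ T : ℕ, (T : ℤ) = 2 * n + h + 1 := ⟨_, Int.toNat_of_nonneg (by omega)⟩
  have hTt : T ≤ t := by omega
  rw [RaySpace.read, ← hT, Int.toNat_natCast]
  induction t, hTt using Nat.le_induction with
  | base => rfl
  | succ t hTt ih =>
    rw [(hγ.stepUp (by omega)).2 h (by rw [hγ.2 t (by omega)]; omega), ih (by omega)]

/-- Otherwise the ray would reach time `2n + 2` with the labels of the origin below level
`1 - n`, and the shortcut through that level has length `2n` only. -/
theorem read_ne_zero (hn : 0 < n) : γ.read i n (-n) ≠ 0 := by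
  intro h0
  obtain ⟨j, hji⟩ := exists_ne i
  have hT := hγ.2 (2 * n + 2) (by omega)
  have hs := height_add_height hji.symm (γ.1 (2 * n + 2))
  have hi0 := height_zero γ i
  have := dist_le_of_labels_eq hji.symm (x := γ.1 0) (y := γ.1 (2 * n + 2)) (Mi := 1 - n)
    (Mj := -2) (by omega) (by push_cast at hT; omega) (by push_cast at hT; omega)
    (fun m hm => ?_) (fun m hm => by
      rw [labels_zero, hγ.labels_other_eq_zero hji.symm _ (by omega)])
  · rw [γ.2.1 0 _ (by omega), height_zero, height_zero] at this
    push_cast at this hT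
    omega
  · rw [labels_zero]
    rcases lt_or_eq_of_le (by omega : m ≤ -n) with hm | rfl
    · exact (hγ.labels_eq_zero _ hm).symm
    · rw [hγ.labels_eq_read le_rfl (by push_cast; omega), h0]

end DescendsExactly

theorem DescendsExactly.of_agree {γ γ' : RaySpace 2 q} {i : Fin 2} {n T : ℕ}
    (hγ : DescendsExactly i n γ.1) (hT : n + 1 ≤ T) (hag : ∀ t ≤ T, γ'.1 t = γ.1 t) :
    DescendsExactly i n γ'.1 ∨ n = 0 ∧ ∃ k m, T ≤ m ∧ DescendsExactly k m γ'.1 := by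
  have e : ∀ t ≤ T, ((γ'.1 t).1 i).height = ((γ.1 t).1 i).height := fun t ht => by rw [hag t ht]
  obtain ⟨k, m, hk⟩ := exists_descendsExactly γ'
  rcases eq_or_ne k i with rfl | hki
  · left
    obtain rfl : m = n := by
      by_contra hmn
      have := e (min m n + 1) (by omega)
      rcases lt_or_gt_of_ne hmn with hlt | hlt
      · rw [hk.2 _ (by omega), hγ.1 _ (by omega)] at this; omega
      · rw [hk.1 _ (by omega), hγ.2 _ (by omega)] at this; omega
    exact hk
  · have hi' : ∀ t, ((γ'.1 t).1 i).height = -((γ'.1 t).1 k).height := fun t => by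
      linarith [height_add_height hki (γ'.1 t)]
    rcases Nat.eq_zero_or_pos n with rfl | hn
    · refine Or.inr ⟨rfl, k, m, not_lt.mp fun hmT => ?_, hk⟩
      have := e (m + 1) hmT
      rw [hi', hk.2 _ (by omega), hγ.2 _ (by omega)] at this
      push_cast at this
      omega
    · exfalso
      rcases Nat.eq_zero_or_pos m with rfl | hm
      · have := e (n + 1) hT
        rw [hi', hk.2 _ (by omega), hγ.2 _ (by omega)] at this
        push_cast at this
        omega
      · have := e 1 (by omega)
        rw [hi', hk.1 _ hm, hγ.1 _ hn] at this
        omega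

section Asymptotic

variable {γ γ' : RaySpace 2 q} {i i' : Fin 2} {n n' : ℕ}

/-- A deeper turn leaves a non-zero label below the shallower one, at a level that the two rays
keep moving away from. -/
theorem Asymptotic.not_lt_of_descendsExactly (hr : Asymptotic γ.1 γ'.1)
    (hγ : DescendsExactly i n γ.1) (hγ' : DescendsExactly i n' γ'.1) : ¬n < n' := by
  intro hlt
  obtain ⟨C, hC⟩ := hr
  set t := 2 * n' + C + 1
  have hdist := le_dist_of_labels_ne (reachable_rays γ γ' t t) (i := i) (n := -n') <| by
    rw [hγ.labels_eq_zero t (by omega), hγ'.labels_eq_read le_rfl (by omega)]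
    exact (hγ'.read_ne_zero (by omega)).symm
  have := hC t
  rw [hγ.2 t (by omega), hγ'.2 t (by omega)] at hdist
  omega

theorem Asymptotic.eq_of_descendsExactly (hr : Asymptotic γ.1 γ'.1)
    (hγ : DescendsExactly i n γ.1) (hγ' : DescendsExactly i' n' γ'.1) : i = i' ∧ n = n' := by
  by_cases hii : i = i'
  · subst hii
    exact ⟨rfl, le_antisymm (not_lt.mp (hr.symm.not_lt_of_descendsExactly hγ' hγ))
      (not_lt.mp (hr.not_lt_of_descendsExactly hγ hγ'))⟩
  · -- the heights in tree `i` drift apart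
    obtain ⟨C, hC⟩ := hr
    set t := n + n' + C + 1
    obtain ⟨m, hm, hm', -, hdist⟩ := exists_labels_eq_of_reachable (reachable_rays γ γ' t t) i
    have := hC t
    have := height_add_height hii (γ'.1 t)
    rw [hγ.2 t (by omega)] at hm hdist
    rw [hγ'.2 t (by omega)] at this
    omega

theorem Asymptotic.descendsExactly (hr : Asymptotic γ.1 γ'.1) (hγ : DescendsExactly i n γ.1) :
    DescendsExactly i n γ'.1 := by
  obtain ⟨i', n', hγ'⟩ := exists_descendsExactly γ'
  obtain ⟨rfl, rfl⟩ := hr.eq_of_descendsExactly hγ hγ'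
  exact hγ'

theorem Asymptotic.height_eq (hr : Asymptotic γ.1 γ'.1) (k : Fin 2) (t : ℕ) :
    ((γ.1 t).1 k).height = ((γ'.1 t).1 k).height := by
  obtain ⟨i, n, hγ⟩ := exists_descendsExactly γ
  exact hγ.height_eq (hr.descendsExactly hγ) k t

theorem Asymptotic.read_eq (hr : Asymptotic γ.1 γ'.1) (hγ : DescendsExactly i n γ.1)
    {h : ℤ} (hh : -(n : ℤ) ≤ h) : γ.read i n h = γ'.read i n h := by
  have hγ' := hr.descendsExactly hγ
  by_contra hne
  obtain ⟨C, hC⟩ := hr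
  obtain ⟨t, ht⟩ : ∃ t : ℕ, (t : ℤ) = 2 * n + h + 1 + C := ⟨_, Int.toNat_of_nonneg (by omega)⟩
  have hdist := le_dist_of_labels_ne (reachable_rays γ γ' t t) (i := i) (n := h) <| by
    rwa [hγ.labels_eq_read hh (by omega), hγ'.labels_eq_read hh (by omega)]
  have := hC t
  rw [hγ.2 t (by omega), hγ'.2 t (by omega)] at hdist
  omega

theorem asymptotic_of_read_eq (hγ : DescendsExactly i n γ.1) (hγ' : DescendsExactly i n γ'.1)
    (hread : ∀ h, -(n : ℤ) ≤ h → γ.read i n h = γ'.read i n h) : Asymptotic γ.1 γ'.1 := by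
  obtain ⟨j, hji⟩ := exists_ne i
  refine asymptotic_of_eventually_eq (T := 2 * n) fun t ht => DLVert.ext fun k => ?_
  have hk := hγ.height_eq hγ' k t
  refine TreeVert.ext hk fun m => ?_
  rcases (by omega : k = i ∨ k = j) with rfl | rfl
  · rcases lt_or_ge m (-n) with hm | hm
    · rw [hγ.labels_eq_zero t hm, hγ'.labels_eq_zero t hm]
    rcases lt_or_ge m (t - 2 * n) with hm' | hm'
    · rw [hγ.labels_eq_read hm (by omega), hγ'.labels_eq_read hm (by omega), hread m hm]
    · have := hγ.2 t (by omega)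
      rw [((γ.1 t).1 k).supp_below m (by omega), ((γ'.1 t).1 k).supp_below m (by omega)]
  · rcases lt_or_ge m 0 with hm | hm
    · rw [hγ.labels_other_eq_zero hji.symm t hm, hγ'.labels_other_eq_zero hji.symm t hm]
    · have := hγ.2 t (by omega)
      have := height_add_height hji (γ.1 t)
      rw [((γ.1 t).1 k).supp_below m (by omega), ((γ'.1 t).1 k).supp_below m (by omega)]

end Asymptotic

section Boundary

theorem preimage_setOf_mk {P : RaySpace d q → Prop}
    (hP : ∀ γ γ' : RaySpace d q, Asymptotic γ.1 γ'.1 → P γ → P γ') :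
    Quotient.mk (asympSetoid d q) ⁻¹'
      {x : Boundary d q | ∃ γ, Quotient.mk (asympSetoid d q) γ = x ∧ P γ} = {γ | P γ} :=
  Set.ext fun γ => ⟨fun ⟨γ', he, h⟩ => hP γ' γ (Quotient.exact he) h, fun h => ⟨γ, rfl, h⟩⟩

theorem isClopen_setOf_mk_iff {P : RaySpace d q → Prop}
    (hP : ∀ γ γ' : RaySpace d q, Asymptotic γ.1 γ'.1 → P γ → P γ') :
    IsClopen {x : Boundary d q | ∃ γ, Quotient.mk (asympSetoid d q) γ = x ∧ P γ} ↔
      IsClopen {γ | P γ} := by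
  rw [← preimage_setOf_mk hP]
  exact isQuotientMap_quotient_mk'.isClopen_preimage.symm

theorem mk_mem_setOf_iff {P : RaySpace d q → Prop}
    (hP : ∀ γ γ' : RaySpace d q, Asymptotic γ.1 γ'.1 → P γ → P γ') {γ : RaySpace d q} :
    Quotient.mk (asympSetoid d q) γ ∈
      {x : Boundary d q | ∃ γ, Quotient.mk (asympSetoid d q) γ = x ∧ P γ} ↔ P γ :=
  Set.ext_iff.mp (preimage_setOf_mk hP) γ

variable {i k : Fin 2} {n : ℕ}

theorem mk_mem_Cset {γ : RaySpace 2 q} :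
    Quotient.mk (asympSetoid 2 q) γ ∈ Cset q i n ↔ DescendsExactly i n γ.1 :=
  mk_mem_setOf_iff fun _ _ hr hγ => Asymptotic.descendsExactly hr hγ

theorem exists_mem_Cset (x : Boundary 2 q) : ∃ i n, x ∈ Cset q i n := by
  obtain ⟨γ, rfl⟩ := Quotient.exists_rep x
  obtain ⟨i, n, hγ⟩ := exists_descendsExactly γ
  exact ⟨i, n, mk_mem_Cset.mpr hγ⟩

theorem eq_of_mem_Cset {x : Boundary 2 q} {n' : ℕ} (hx : x ∈ Cset q i n)
    (hx' : x ∈ Cset q k n') : i = k ∧ n = n' := by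
  obtain ⟨γ, rfl⟩ := Quotient.exists_rep x
  exact (mk_mem_Cset.mp hx).unique (mk_mem_Cset.mp hx')

theorem isClopen_Cset (hn : n ≠ 0) : IsClopen (Cset q i n) :=
  (isClopen_setOf_mk_iff fun _ _ hr hγ => Asymptotic.descendsExactly hr hγ).mpr <|
    isClopen_of_agree (n + 1) fun _ _ hag hγ =>
      (DescendsExactly.of_agree hγ le_rfl hag).resolve_right fun h => hn h.1

def firstUp (q : ℕ) (i : Fin 2) : Set (Boundary 2 q) :=
  {x | ∃ γ, Quotient.mk (asympSetoid 2 q) γ = x ∧ ((γ.1 1).1 i).height = 1}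

theorem isClopen_firstUp : IsClopen (firstUp q i) :=
  (isClopen_setOf_mk_iff fun _ _ hr h => (hr.height_eq i 1).symm.trans h).mpr <|
    isClopen_of_agree 1 fun _ γ' hag h => by
      change ((γ'.1 1).1 i).height = 1
      rwa [hag 1 le_rfl]

theorem mk_mem_firstUp {γ : RaySpace 2 q} :
    Quotient.mk (asympSetoid 2 q) γ ∈ firstUp q i ↔ ((γ.1 1).1 i).height = 1 :=
  mk_mem_setOf_iff fun _ _ hr h => (hr.height_eq i 1).symm.trans h

theorem mem_firstUp_iff {x : Boundary 2 q} (hx : x ∈ Cset q k 0) : x ∈ firstUp q i ↔ k = i := by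
  obtain ⟨γ, rfl⟩ := Quotient.exists_rep x
  have hγ := mk_mem_Cset.mp hx
  refine mk_mem_firstUp.trans ?_
  have h1 := hγ.2 1 (Nat.zero_le 1)
  rcases eq_or_ne k i with rfl | hki
  · simp [h1]
  · have := height_add_height hki (γ.1 1)
    simp only [hki, iff_false]
    push_cast at h1
    omega

theorem IsPreconnected.exists_subset_Cset {S : Set (Boundary 2 q)} (hS : IsPreconnected S) :
    ∃ i n, S ⊆ Cset q i n := by
  rcases S.eq_empty_or_nonempty with rfl | ⟨x, hx⟩
  · exact ⟨0, 0, Set.empty_subset _⟩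
  obtain ⟨i, n, hxi⟩ := exists_mem_Cset x
  refine ⟨i, n, fun z hz => ?_⟩
  obtain ⟨k, m, hzk⟩ := exists_mem_Cset z
  rcases eq_or_ne n 0 with rfl | hn
  · rcases eq_or_ne m 0 with rfl | hm
    · have hzi := hS.subset_isClopen isClopen_firstUp ⟨x, hx, (mem_firstUp_iff hxi).mpr rfl⟩ hz
      rwa [← (mem_firstUp_iff hzk).mp hzi]
    · have := (hS.subset_isClopen (isClopen_Cset hm) ⟨z, hz, hzk⟩ hx)
      exact absurd (eq_of_mem_Cset this hxi).2 hm
  · exact hS.subset_isClopen (isClopen_Cset hn) ⟨x, hx, hxi⟩ hz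

end Boundary

section Read

variable {i : Fin 2} {n : ℕ} {h : ℤ}

noncomputable def Boundary.read (x : Boundary 2 q) (i : Fin 2) (n : ℕ) (h : ℤ) : ℕ :=
  (Quotient.out x).read i n h

theorem Boundary.read_mk {γ : RaySpace 2 q} (hγ : DescendsExactly i n γ.1)
    (hh : -(n : ℤ) ≤ h) : Boundary.read (Quotient.mk (asympSetoid 2 q) γ) i n h = γ.read i n h := by
  have hr : Asymptotic γ.1 (Quotient.out (Quotient.mk (asympSetoid 2 q) γ)).1 :=
    Quotient.mk_out (s := asympSetoid 2 q) γ |>.symm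
  exact (hr.read_eq hγ hh).symm

theorem Boundary.eq_of_read_eq {x y : Boundary 2 q} (hx : x ∈ Cset q i n) (hy : y ∈ Cset q i n)
    (hread : ∀ h, -(n : ℤ) ≤ h → x.read i n h = y.read i n h) : x = y := by
  obtain ⟨γ, rfl⟩ := Quotient.exists_rep x
  obtain ⟨γ', rfl⟩ := Quotient.exists_rep y
  have hγ := mk_mem_Cset.mp hx
  have hγ' := mk_mem_Cset.mp hy
  refine Quotient.sound (asymptotic_of_read_eq hγ hγ' fun h hh => ?_)
  rw [← Boundary.read_mk hγ hh, ← Boundary.read_mk hγ' hh]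
  exact hread h hh

/-- Without the classes turning late this set would not be open for `n = 0`. -/
def readNbhd (q : ℕ) (i : Fin 2) (n : ℕ) (h : ℤ) (P : ℕ → Prop) : Set (Boundary 2 q) :=
  {x | ∃ γ, Quotient.mk (asympSetoid 2 q) γ = x ∧
    (DescendsExactly i n γ.1 ∧ P (γ.read i n h) ∨
      ∃ k m, (2 * n + h + 1).toNat ≤ m ∧ DescendsExactly k m γ.1)}

variable {P : ℕ → Prop}

theorem mk_mem_readNbhd (hh : -(n : ℤ) ≤ h) {γ : RaySpace 2 q} :
    Quotient.mk (asympSetoid 2 q) γ ∈ readNbhd q i n h P ↔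
      DescendsExactly i n γ.1 ∧ P (γ.read i n h) ∨
        ∃ k m, (2 * n + h + 1).toNat ≤ m ∧ DescendsExactly k m γ.1 :=
  mk_mem_setOf_iff fun _ _ hr => Or.imp
    (fun ⟨hγ, hP⟩ => ⟨hr.descendsExactly hγ, hr.read_eq hγ hh ▸ hP⟩)
    fun ⟨k, m, hm, hγ⟩ => ⟨k, m, hm, hr.descendsExactly hγ⟩

theorem isOpen_readNbhd (hh : -(n : ℤ) ≤ h) (P : ℕ → Prop) : IsOpen (readNbhd q i n h P) := by
  have hT : n + 1 ≤ (2 * n + h + 1).toNat := by omega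
  refine isQuotientMap_quotient_mk'.isOpen_preimage.mp (isOpen_of_agree fun γ hγ => ?_)
  rcases (mk_mem_readNbhd hh).mp hγ with ⟨hγ, hP⟩ | ⟨k, m, hm, hγ⟩
  · refine ⟨(2 * n + h + 1).toNat, fun γ' hag => (mk_mem_readNbhd hh).mpr ?_⟩
    rcases hγ.of_agree hT hag with hγ' | ⟨-, hdeep⟩
    · exact Or.inl ⟨hγ', by rwa [RaySpace.read, hag _ le_rfl]⟩
    · exact Or.inr hdeep
  · refine ⟨m + 1, fun γ' hag => (mk_mem_readNbhd hh).mpr (Or.inr ⟨k, m, hm, ?_⟩)⟩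
    exact (hγ.of_agree le_rfl hag).resolve_right fun h0 => by omega

theorem mem_readNbhd_iff {x : Boundary 2 q} (hx : x ∈ Cset q i n) (hh : -(n : ℤ) ≤ h) :
    x ∈ readNbhd q i n h P ↔ P (x.read i n h) := by
  obtain ⟨γ, rfl⟩ := Quotient.exists_rep x
  have hγ := mk_mem_Cset.mp hx
  refine (mk_mem_readNbhd hh).trans ?_
  rw [Boundary.read_mk hγ hh, or_iff_left, and_iff_right hγ]
  rintro ⟨k, m, hm, hγ'⟩
  have := (hγ.unique hγ').2
  omega

end Read

theorem boundary_totallyDisconnected_general {q : ℕ} :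
    TotallyDisconnectedSpace (Boundary 2 q) := by
  refine ⟨fun S _ hS x hx y hy => by_contra fun hxy => ?_⟩
  obtain ⟨i, n, hSC⟩ := IsPreconnected.exists_subset_Cset hS
  obtain ⟨h, hh, hne⟩ : ∃ h, -(n : ℤ) ≤ h ∧ x.read i n h ≠ y.read i n h := by
    by_contra! hread
    exact hxy (Boundary.eq_of_read_eq (hSC hx) (hSC hy) hread)
  have hmem {z} (hz : z ∈ S) (P : ℕ → Prop) := mem_readNbhd_iff (P := P) (hSC hz) hh
  obtain ⟨z, hzS, hz, hz'⟩ := hS _ _ (isOpen_readNbhd hh (· = x.read i n h))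
    (isOpen_readNbhd hh (· ≠ x.read i n h)) (fun z hz => (em _).imp (hmem hz _).2 (hmem hz _).2)
    ⟨x, hx, (hmem hx _).2 rfl⟩ ⟨y, hy, (hmem hy _).2 hne.symm⟩
  exact (hmem hzS _).1 hz' ((hmem hzS _).1 hz)

/-- the visual boundary of `DL_2(q)` is totally disconnected. -/
theorem boundary_totallyDisconnected {q : ℕ} (hq : 2 ≤ q) :
    TotallyDisconnectedSpace (Boundary 2 q) :=
  boundary_totallyDisconnected_general

end DL
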